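/- arXiv:1909.02990 — 2 statements merged into one kernel-verified Lean document; each statement's English description precedes it below -/
import Mathlib

section
/- Let S ⊆ ℝ² be a nonempty open connected set with Lebesgue measure |S| = 1. Suppose there exist L ≥ 0 and a map γ : [0,1] → ℝ² that is continuous, has total variation eVariationOn γ [0,1] ≤ L, and whose image γ([0,1]) contains the topological frontier of S. Then there exists a point x ∈ ℝ² such that the open disc of radius (2(4⌈L⌉+1))⁻¹ centered at x is contained in S; in particular, S contains a disc whose radius is bounded below by a positive constant depending only on L. -/
/-!
Cut the curve at arc lengths `0, r, 2r, …`, where `r = (4⌈L⌉ + 1)⁻¹`: this gives at most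
`L / r + 1` pieces of diameter at most `r`. Tile the plane by half-open squares of side `r`, each
containing a disc of radius `r / 2`. If none of these discs lies in `S`, every square meeting `S`
also meets its complement, so, being convex, it meets the frontier of `S` and hence one of the
pieces. The squares meeting one piece fit in a square of side `2r`, so
`|S| ≤ 4r² (L / r + 1) < 1`. When `L ≤ 0` the curve is a point, and a planar set whose frontier is
at most a point has measure `0` or `∞`.
-/

open MeasureTheory Set

theorem IsPreconnected.inter_frontier_nonempty {X : Type*} [TopologicalSpace X] {Q S : Set X}
    (hQ : IsPreconnected Q) (hQS : (Q ∩ S).Nonempty) (hQS' : (Q \ S).Nonempty) :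
    (Q ∩ frontier S).Nonempty := by
  by_contra h
  have hcover : Q ⊆ interior S ∪ (closure S)ᶜ := fun x hx => by
    by_contra hx'
    simp only [mem_union, mem_compl_iff, not_or, not_not] at hx'
    exact h ⟨x, hx, hx'.2, hx'.1⟩
  obtain ⟨x, hxQ, hxS⟩ := hQS
  have hQint : Q ⊆ interior S :=
    hQ.subset_left_of_subset_union isOpen_interior isClosed_closure.isOpen_compl
      (disjoint_compl_right.mono_left interior_subset_closure) hcover
      ⟨x, hxQ, (hcover hxQ).resolve_right (not_not.mpr (subset_closure hxS))⟩
  obtain ⟨y, hyQ, hyS⟩ := hQS'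
  exact hyS (interior_subset (hQint hyQ))

section FrontierSubsingleton

variable {E : Type*} [NormedAddCommGroup E] [NormedSpace ℝ E]

theorem subset_singleton_or_compl_subset_of_frontier_subset (hE : 1 < Module.rank ℝ E)
    {S : Set E} {p : E} (h : frontier S ⊆ {p}) : S ⊆ {p} ∨ {p}ᶜ ⊆ S := by
  refine or_iff_not_imp_left.mpr fun hSp x hxp => ?_
  by_contra hxS
  obtain ⟨y, hyS, hyp⟩ := not_subset.mp hSp
  obtain ⟨z, hzp, hzS⟩ := (isConnected_compl_singleton_of_one_lt_rank hE p).isPreconnected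
    |>.inter_frontier_nonempty ⟨y, hyp, hyS⟩ ⟨x, hxp, hxS⟩
  exact hzp (h hzS)

theorem measure_eq_zero_or_top_of_frontier_subsingleton [MeasurableSpace E] [BorelSpace E]
    [FiniteDimensional ℝ E] (hE : 1 < Module.rank ℝ E)
    (μ : Measure E) [μ.IsAddHaarMeasure] {S : Set E} (h : (frontier S).Subsingleton) :
    μ S = 0 ∨ μ S = ⊤ := by
  have : Nontrivial E := rank_pos_iff_nontrivial.mp (zero_lt_one.trans hE)
  obtain ⟨p, hp⟩ : ∃ p : E, frontier S ⊆ {p} := by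
    rcases h.eq_empty_or_singleton with he | ⟨p, hp⟩
    · exact ⟨0, he ▸ empty_subset _⟩
    · exact ⟨p, hp.le⟩
  rcases subset_singleton_or_compl_subset_of_frontier_subset hE hp with hS | hS
  · exact .inl (measure_mono_null hS (measure_singleton p))
  · refine .inr (top_le_iff.mp ?_)
    calc ⊤ = μ univ := (measure_univ_of_isAddLeftInvariant μ).symm
      _ ≤ μ {p}ᶜ + μ {p} := by rw [← compl_union_self {p}]; exact measure_union_le _ _
      _ ≤ μ S := by rw [measure_singleton, add_zero]; exact measure_mono hS

end FrontierSubsingleton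

section Variation

variable {α E : Type*} [LinearOrder α] [PseudoMetricSpace E]

theorem LocallyBoundedVariationOn.dist_le_variationOnFromTo_sub {f : α → E} {s : Set α}
    (hf : LocallyBoundedVariationOn f s) {a b c : α} (ha : a ∈ s) (hb : b ∈ s) (hc : c ∈ s)
    (hbc : b ≤ c) :
    dist (f b) (f c) ≤ variationOnFromTo f s a c - variationOnFromTo f s a b := by
  rw [← variationOnFromTo.add hf ha hb hc, add_sub_cancel_left,
    variationOnFromTo.eq_of_le f s hbc, dist_edist]
  exact ENNReal.toReal_mono (hf b c hb hc)
    (eVariationOn.edist_le f ⟨hb, le_rfl, hbc⟩ ⟨hc, hbc, le_rfl⟩)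

theorem exists_image_subset_biUnion_of_eVariationOn_le {f : α → E} {a b : α} {L r : ℝ}
    (hL : 0 ≤ L) (hr : 0 < r) (hf : eVariationOn f (Icc a b) ≤ ENNReal.ofReal L) :
    ∃ (N : ℕ) (C : ℕ → Set E), N ≤ L / r ∧ f '' Icc a b ⊆ ⋃ j ∈ Finset.range (N + 1), C j ∧
      ∀ j, ∀ x ∈ C j, ∀ y ∈ C j, dist x y ≤ r := by
  have hbv : LocallyBoundedVariationOn f (Icc a b) :=
    BoundedVariationOn.locallyBoundedVariationOn (ne_top_of_le_ne_top ENNReal.ofReal_ne_top hf)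
  set φ := variationOnFromTo f (Icc a b) a
  have hφ : ∀ t ∈ Icc a b, 0 ≤ φ t ∧ φ t ≤ L := fun t ht => by
    refine ⟨variationOnFromTo.nonneg_of_le f _ ht.1, ?_⟩
    simp only [φ, variationOnFromTo.eq_of_le f _ ht.1]
    exact ENNReal.toReal_le_of_le_ofReal hL ((eVariationOn.mono f inter_subset_left).trans hf)
  refine ⟨⌊L / r⌋₊, fun j => f '' {t ∈ Icc a b | φ t ∈ Icc (j * r) ((j + 1) * r)},
    Nat.floor_le (by positivity), ?_, ?_⟩
  · rintro _ ⟨t, ht, rfl⟩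
    have hj : ⌊φ t / r⌋₊ ∈ Finset.range (⌊L / r⌋₊ + 1) :=
      Finset.mem_range_succ_iff.mpr (Nat.floor_le_floor (by gcongr; exact (hφ t ht).2))
    refine mem_biUnion hj ⟨t, ⟨ht, ?_, ?_⟩, rfl⟩
    · exact (le_div_iff₀ hr).mp (Nat.floor_le (div_nonneg (hφ t ht).1 hr.le))
    · exact ((div_le_iff₀ hr).mp (Nat.lt_floor_add_one _).le)
  · rintro j _ ⟨t, ⟨ht, htj⟩, rfl⟩ _ ⟨t', ⟨ht', ht'j⟩, rfl⟩
    have ha : a ∈ Icc a b := ⟨le_rfl, ht.1.trans ht.2⟩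
    rcases le_total t t' with htt' | htt'
    · have := hbv.dist_le_variationOnFromTo_sub ha ht ht' htt'
      linarith [htj.1, ht'j.2]
    · rw [dist_comm]
      have := hbv.dist_le_variationOnFromTo_sub ha ht' ht htt'
      linarith [htj.2, ht'j.1]

end Variation

theorem subsingleton_image_of_eVariationOn_eq_zero {α E : Type*} [LinearOrder α] [MetricSpace E]
    {f : α → E} {s : Set α} (hf : eVariationOn f s = 0) : (f '' s).Subsingleton := by
  rintro _ ⟨x, hx, rfl⟩ _ ⟨y, hy, rfl⟩
  exact edist_eq_zero.mp ((eVariationOn.eq_zero_iff f).mp hf x hx y hy)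

theorem exists_setOf_floor_div_eq_subset_Ico {T : Set ℝ} {r : ℝ} (hr : 0 < r)
    (hT : ∀ x ∈ T, ∀ y ∈ T, |x - y| ≤ r) :
    ∃ a, {y | ∃ w ∈ T, ⌊y / r⌋ = ⌊w / r⌋} ⊆ Ico a (a + 2 * r) := by
  rcases T.eq_empty_or_nonempty with rfl | ⟨w₀, hw₀⟩
  · exact ⟨0, by simp⟩
  have hbdd : BddBelow T := ⟨w₀ - r, fun x hx => by linarith [(abs_le.mp (hT w₀ hw₀ x hx)).2]⟩
  have hlow : ∀ w ∈ T, sInf T ≤ w ∧ w ≤ sInf T + r := fun w hw => by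
    have : w - r ≤ sInf T :=
      le_csInf ⟨w₀, hw₀⟩ fun x hx => by linarith [(abs_le.mp (hT w hw x hx)).2]
    exact ⟨csInf_le hbdd hw, by linarith⟩
  refine ⟨⌊sInf T / r⌋ * r, ?_⟩
  rintro y ⟨w, hw, hyw⟩
  have h₁ : ⌊sInf T / r⌋ ≤ ⌊w / r⌋ := Int.floor_le_floor (by gcongr; exact (hlow w hw).1)
  have h₂ : ⌊w / r⌋ ≤ ⌊sInf T / r⌋ + 1 := by
    rw [← Int.floor_add_one]
    exact Int.floor_le_floor (by rw [div_add_one hr.ne']; gcongr; exact (hlow w hw).2)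
  have hy := Int.floor_eq_iff.mp hyw
  rw [le_div_iff₀ hr, div_lt_iff₀ hr] at hy
  have h₁' : (⌊sInf T / r⌋ : ℝ) ≤ ⌊w / r⌋ := by exact_mod_cast h₁
  have h₂' : (⌊w / r⌋ : ℝ) ≤ ⌊sInf T / r⌋ + 1 := by exact_mod_cast h₂
  constructor <;> nlinarith

namespace EuclideanSpace

variable {ι : Type*}

theorem volume_setOf_forall_mem_Ico [Fintype ι] (a b : ι → ℝ) :
    volume {x : EuclideanSpace ℝ ι | ∀ i, x i ∈ Ico (a i) (b i)} =
      ∏ i, ENNReal.ofReal (b i - a i) := by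
  have : {x : EuclideanSpace ℝ ι | ∀ i, x i ∈ Ico (a i) (b i)} =
      WithLp.ofLp ⁻¹' univ.pi fun i => Ico (a i) (b i) := by
    ext; simp
  rw [this, (PiLp.volume_preserving_ofLp ι).measure_preimage
    (MeasurableSet.univ_pi fun _ => measurableSet_Ico).nullMeasurableSet, volume_pi_pi]
  simp only [Real.volume_Ico]

def gridCell (r : ℝ) (x : EuclideanSpace ℝ ι) : Set (EuclideanSpace ℝ ι) :=
  {y | ∀ i, ⌊y i / r⌋ = ⌊x i / r⌋}

variable {r : ℝ}

theorem mem_gridCell_comm {x y : EuclideanSpace ℝ ι} : y ∈ gridCell r x ↔ x ∈ gridCell r y :=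
  forall_congr' fun _ => eq_comm

theorem mem_gridCell_self (x : EuclideanSpace ℝ ι) : x ∈ gridCell r x := fun _ => rfl

theorem mem_gridCell_iff (hr : 0 < r) {x y : EuclideanSpace ℝ ι} :
    y ∈ gridCell r x ↔ ∀ i, y i ∈ Ico (⌊x i / r⌋ * r) ((⌊x i / r⌋ + 1) * r) := by
  simp only [gridCell, mem_ofPred, mem_Ico, Int.floor_eq_iff, le_div_iff₀ hr, div_lt_iff₀ hr]

theorem convex_gridCell (hr : 0 < r) (x : EuclideanSpace ℝ ι) : Convex ℝ (gridCell r x) := by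
  have : gridCell r x = ⋂ i, projₗ i ⁻¹' Ico (⌊x i / r⌋ * r) ((⌊x i / r⌋ + 1) * r) := by
    ext y
    simp [mem_gridCell_iff hr]
  rw [this]
  exact convex_iInter fun i => (convex_Ico _ _).linear_preimage _

theorem exists_ball_subset_gridCell [Fintype ι] (hr : 0 < r) (x : EuclideanSpace ℝ ι) :
    ∃ c, Metric.ball c (r / 2) ⊆ gridCell r x := by
  refine ⟨WithLp.toLp 2 fun i => (⌊x i / r⌋ + 2⁻¹) * r, fun y hy => ?_⟩
  refine (mem_gridCell_iff hr).mpr fun i => ?_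
  have : |y i - (⌊x i / r⌋ + 2⁻¹) * r| < r / 2 := (PiLp.dist_apply_le y _ i).trans_lt hy
  constructor <;> linarith [abs_lt.mp this]

theorem volume_biUnion_gridCell_le [Fintype ι] (hr : 0 < r) {C : Set (EuclideanSpace ℝ ι)}
    (hC : ∀ x ∈ C, ∀ y ∈ C, dist x y ≤ r) :
    volume (⋃ x ∈ C, gridCell r x) ≤ ENNReal.ofReal (2 * r) ^ Fintype.card ι := by
  choose a ha using fun i => exists_setOf_floor_div_eq_subset_Ico (T := (· i) '' C) hr
    (by rintro _ ⟨x, hx, rfl⟩ _ ⟨y, hy, rfl⟩; exact (PiLp.dist_apply_le x y i).trans (hC x hx y hy))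
  calc volume (⋃ x ∈ C, gridCell r x)
      ≤ volume {y : EuclideanSpace ℝ ι | ∀ i, y i ∈ Ico (a i) (a i + 2 * r)} :=
        measure_mono <| iUnion₂_subset fun x hx y hy i => ha i ⟨x i, mem_image_of_mem _ hx, hy i⟩
    _ = ENNReal.ofReal (2 * r) ^ Fintype.card ι := by
        simp only [volume_setOf_forall_mem_Ico, add_sub_cancel_left, Finset.prod_const,
          Finset.card_univ]

theorem subset_biUnion_gridCell_frontier [Fintype ι] (hr : 0 < r) {S : Set (EuclideanSpace ℝ ι)}
    (hS : ∀ c, ¬ Metric.ball c (r / 2) ⊆ S) : S ⊆ ⋃ w ∈ frontier S, gridCell r w := by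
  intro x hx
  obtain ⟨c, hc⟩ := exists_ball_subset_gridCell hr x
  obtain ⟨w, hwx, hw⟩ := (convex_gridCell hr x).isPreconnected.inter_frontier_nonempty
    ⟨x, mem_gridCell_self x, hx⟩ (not_subset.mp fun h => hS c (hc.trans h))
  exact mem_biUnion hw (mem_gridCell_comm.mp hwx)

theorem volume_le_of_frontier_subset_biUnion [Fintype ι] {κ : Type*} (hr : 0 < r)
    {S : Set (EuclideanSpace ℝ ι)} (hS : ∀ c, ¬ Metric.ball c (r / 2) ⊆ S) {J : Finset κ}
    {C : κ → Set (EuclideanSpace ℝ ι)} (hSC : frontier S ⊆ ⋃ j ∈ J, C j)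
    (hC : ∀ j, ∀ x ∈ C j, ∀ y ∈ C j, dist x y ≤ r) :
    volume S ≤ J.card * ENNReal.ofReal (2 * r) ^ Fintype.card ι :=
  calc volume S ≤ volume (⋃ j ∈ J, ⋃ x ∈ C j, gridCell r x) := by
        refine measure_mono ((subset_biUnion_gridCell_frontier hr hS).trans ?_)
        exact (biUnion_subset_biUnion_left hSC).trans_eq (by simp only [biUnion_iUnion])
    _ ≤ ∑ j ∈ J, volume (⋃ x ∈ C j, gridCell r x) := measure_biUnion_finset_le _ _
    _ ≤ ∑ j ∈ J, ENNReal.ofReal (2 * r) ^ Fintype.card ι :=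
        Finset.sum_le_sum fun j _ => volume_biUnion_gridCell_le hr (hC j)
    _ = J.card * ENNReal.ofReal (2 * r) ^ Fintype.card ι := by
        rw [Finset.sum_const, nsmul_eq_mul]

end EuclideanSpace

theorem area_perimeter_disc_general
    (S : Set (EuclideanSpace ℝ (Fin 2)))
    (hvol : volume S = 1)
    (L : ℝ)
    (γ : ℝ → EuclideanSpace ℝ (Fin 2))
    (hγvar : eVariationOn γ (Set.Icc 0 1) ≤ ENNReal.ofReal L)
    (hfr : frontier S ⊆ γ '' (Set.Icc 0 1)) :
    ∃ x : EuclideanSpace ℝ (Fin 2),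
      Metric.ball x ((2 * (4 * (⌈L⌉ : ℝ) + 1))⁻¹) ⊆ S := by
  rcases le_or_gt L 0 with hL | hL
  · have hrank : 1 < Module.rank ℝ (EuclideanSpace ℝ (Fin 2)) := by
      rw [← Module.finrank_eq_rank, finrank_euclideanSpace_fin]; exact_mod_cast one_lt_two
    have hγ := subsingleton_image_of_eVariationOn_eq_zero
      (le_antisymm (hγvar.trans_eq (ENNReal.ofReal_of_nonpos hL)) zero_le)
    rcases measure_eq_zero_or_top_of_frontier_subsingleton hrank volume (hγ.anti hfr) with h | h <;>
      simp [hvol] at h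
  have hc : (1 : ℝ) ≤ ⌈L⌉ := by exact_mod_cast Int.one_le_ceil_iff.mpr hL
  set c : ℝ := (⌈L⌉ : ℝ)
  set r := (4 * c + 1)⁻¹
  have hr : 0 < r := by positivity
  obtain ⟨N, C, hN, hγC, hC⟩ := exists_image_subset_biUnion_of_eVariationOn_le hL.le hr hγvar
  by_contra hball
  have hS : ∀ x, ¬ Metric.ball x (r / 2) ⊆ S := fun x hx =>
    hball ⟨x, by rwa [mul_comm, mul_inv, ← div_eq_mul_inv]⟩
  have hvolS := EuclideanSpace.volume_le_of_frontier_subset_biUnion hr hS (hfr.trans hγC) hC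
  rw [hvol, Finset.card_range, Fintype.card_fin, ← ENNReal.ofReal_pow (by positivity),
    ← ENNReal.ofReal_natCast, ← ENNReal.ofReal_mul (by positivity)] at hvolS
  have hNc : (N : ℝ) ≤ c * (4 * c + 1) :=
    hN.trans (by rw [div_inv_eq_mul]; gcongr; exact Int.le_ceil L)
  have harea : ((N + 1 : ℕ) : ℝ) * (2 * r) ^ 2 < 1 := by
    -- `(4c + 1)² = 4 (c (4c + 1) + 1) + (4c - 3)`
    simp only [r, Nat.cast_add_one]
    field_simp
    nlinarith
  exact (ENNReal.one_le_ofReal.mp hvolS).not_gt harea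

/-- Lemma 4.4 (Lem:AreaPer): a nonempty open connected planar set of measure 1 whose
frontier is covered by a rectifiable curve of length at most `L` contains a disc of
radius `(2(4⌈L⌉+1))⁻¹`. -/
theorem area_perimeter_disc
    (S : Set (EuclideanSpace ℝ (Fin 2))) (hSne : S.Nonempty)
    (hSopen : IsOpen S) (hSconn : IsConnected S)
    (hvol : volume S = 1)
    (L : ℝ) (hL : 0 ≤ L)
    (γ : ℝ → EuclideanSpace ℝ (Fin 2))
    (hγcont : ContinuousOn γ (Set.Icc 0 1))
    (hγvar : eVariationOn γ (Set.Icc 0 1) ≤ ENNReal.ofReal L)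
    (hfr : frontier S ⊆ γ '' (Set.Icc 0 1)) :
    ∃ x : EuclideanSpace ℝ (Fin 2),
      Metric.ball x ((2 * (4 * (⌈L⌉ : ℝ) + 1))⁻¹) ⊆ S :=
  area_perimeter_disc_general S hvol L γ hγvar hfr
end

section
/- Let L > 0, let N be a positive integer, and let γ : [0,1] → ℝ² be continuous with total variation eVariationOn γ [0,1] ≤ L. For (i,j) ∈ ℤ² let Q^N_{i,j} := [i/N, (i+1)/N) × [j/N, (j+1)/N) ⊆ ℝ² be the half-open grid square of side 1/N. Then the image γ([0,1]) intersects at most 4·N·⌈L⌉ of the squares Q^N_{i,j}; that is, the set {(i,j) ∈ ℤ² : γ([0,1]) ∩ Q^N_{i,j} ≠ ∅} has at most 4N⌈L⌉ elements. -/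
open MeasureTheory Set

/-- The half-open grid square of side `1/N` indexed by `(i,j) ∈ ℤ²`. -/
def gridSquare (N : ℕ) (p : ℤ × ℤ) : Set (EuclideanSpace ℝ (Fin 2)) :=
  {x | x 0 ∈ Set.Ico ((p.1 : ℝ) / N) (((p.1 : ℝ) + 1) / N) ∧
       x 1 ∈ Set.Ico ((p.2 : ℝ) / N) (((p.2 : ℝ) + 1) / N)}


/-! The variation function `v t = Var(γ, [0, t])` takes values in `[0, L]` and satisfies
`dist (γ x) (γ y) ≤ |v y - v x|`. Hence `[0, 1]` is covered by the `N⌈L⌉` sets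
`{t | N v t ∈ [k, k + 1]}`, each of which `γ` maps to a set of diameter at most `1/N`; the
points of such a set lie in at most two consecutive columns and two consecutive rows of the grid. -/

local notation "ℝ²" => EuclideanSpace ℝ (Fin 2)

namespace Int

lemma encard_le_two_of_sub_le_one {Z : Set ℤ} (h : ∀ a ∈ Z, ∀ b ∈ Z, a - b ≤ 1) :
    Z.encard ≤ 2 := by
  rcases Z.eq_empty_or_nonempty with rfl | ⟨a, ha⟩
  · simp
  have hbdd : BddBelow Z := ⟨a - 1, fun b hb => by linarith [h a ha b hb]⟩
  have hmin := csInf_mem ⟨a, ha⟩ hbdd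
  calc Z.encard ≤ ({sInf Z, sInf Z + 1} : Set ℤ).encard := encard_mono fun b hb => by
        have := csInf_le hbdd hb
        have := h b hb _ hmin
        simp only [mem_insert_iff, mem_singleton_iff]
        omega
    _ ≤ 2 := (encard_insert_le _ _).trans (by norm_num)

lemma floor_sub_floor_le_one {R : Type*} [Ring R] [LinearOrder R] [IsStrictOrderedRing R]
    [FloorRing R] {x y : R} (h : x - y ≤ 1) : ⌊x⌋ - ⌊y⌋ ≤ 1 := by
  have := floor_mono (sub_le_iff_le_add'.mp h)
  rw [floor_add_one] at this
  omega

lemma floor_natCast_mul_eq_iff {N : ℕ} (hN : 0 < N) (q : ℤ) (r : ℝ) :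
    ⌊(N : ℝ) * r⌋ = q ↔ r ∈ Ico ((q : ℝ) / N) ((q + 1) / N) := by
  have hN' : (0 : ℝ) < N := by exact_mod_cast hN
  rw [floor_eq_iff, mem_Ico, div_le_iff₀ hN', lt_div_iff₀ hN', mul_comm r]

end Int

noncomputable def gridIndex (N : ℕ) (x : ℝ²) : ℤ × ℤ :=
  (⌊(N : ℝ) * x 0⌋, ⌊(N : ℝ) * x 1⌋)

lemma mem_gridSquare_iff {N : ℕ} (hN : 0 < N) {x : ℝ²} {p : ℤ × ℤ} :
    x ∈ gridSquare N p ↔ gridIndex N x = p := by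
  rw [gridSquare, mem_ofPred_eq, ← Int.floor_natCast_mul_eq_iff hN,
    ← Int.floor_natCast_mul_eq_iff hN, gridIndex, Prod.ext_iff]

lemma setOf_inter_gridSquare_nonempty {N : ℕ} (hN : 0 < N) (A : Set (ℝ²)) :
    {p | (A ∩ gridSquare N p).Nonempty} = gridIndex N '' A := by
  ext p
  simp only [mem_ofPred_eq, mem_image, Set.Nonempty, mem_inter_iff, mem_gridSquare_iff hN]

lemma encard_image_gridIndex_le_four {N : ℕ} {A : Set (ℝ²)}
    (hA : ∀ x ∈ A, ∀ y ∈ A, N * dist x y ≤ 1) :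
    (gridIndex N '' A).encard ≤ 4 := by
  have hcoord (i : Fin 2) :
      ((fun x : ℝ² => ⌊(N : ℝ) * x i⌋) '' A).encard ≤ 2 := by
    refine Int.encard_le_two_of_sub_le_one ?_
    rintro _ ⟨x, hx, rfl⟩ _ ⟨y, hy, rfl⟩
    refine Int.floor_sub_floor_le_one ?_
    calc N * x i - N * y i ≤ N * dist (x i) (y i) := by
          rw [← mul_sub, Real.dist_eq]; gcongr; exact le_abs_self _
      _ ≤ N * dist x y := by gcongr; exact PiLp.dist_apply_le x y i
      _ ≤ 1 := hA x hx y hy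
  calc (gridIndex N '' A).encard
      ≤ (((fun x : ℝ² => ⌊(N : ℝ) * x 0⌋) '' A) ×ˢ
          ((fun x : ℝ² => ⌊(N : ℝ) * x 1⌋) '' A)).encard :=
        encard_mono fun _ ⟨x, hx, hp⟩ => hp ▸ ⟨mem_image_of_mem _ hx,
          mem_image_of_mem _ hx⟩
    _ ≤ 2 * 2 := by rw [encard_prod]; gcongr <;> exact hcoord _
    _ = 4 := by norm_num

lemma encard_image_gridIndex_le_of_subset_biUnion {ι : Type*} {N : ℕ}
    {A : Set (ℝ²)} {t : Finset ι} {B : ι → Set (ℝ²)}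
    (hAB : A ⊆ ⋃ k ∈ t, B k) (hB : ∀ k ∈ t, ∀ x ∈ B k, ∀ y ∈ B k, N * dist x y ≤ 1) :
    (gridIndex N '' A).encard ≤ 4 * t.card := by
  calc (gridIndex N '' A).encard ≤ (⋃ k ∈ t, gridIndex N '' B k).encard := by
        rw [← image_iUnion₂]; exact encard_mono (image_mono hAB)
    _ ≤ ∑ k ∈ t, (gridIndex N '' B k).encard := t.set_encard_biUnion_le _
    _ ≤ ∑ k ∈ t, 4 := Finset.sum_le_sum fun k hk => encard_image_gridIndex_le_four (hB k hk)
    _ = 4 * t.card := by rw [Finset.sum_const, nsmul_eq_mul, mul_comm]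

lemma dist_le_abs_variationOnFromTo_sub {α E : Type*} [LinearOrder α] [PseudoMetricSpace E]
    {f : α → E} {s : Set α} (hf : LocallyBoundedVariationOn f s) {a x y : α}
    (ha : a ∈ s) (hx : x ∈ s) (hy : y ∈ s) :
    dist (f x) (f y) ≤ |variationOnFromTo f s a y - variationOnFromTo f s a x| := by
  wlog hxy : x ≤ y generalizing x y
  · rw [dist_comm, abs_sub_comm]; exact this hy hx (le_of_not_ge hxy)
  rw [variationOnFromTo.sub_right hf ha hy hx, variationOnFromTo.eq_of_le f s hxy]
  exact ((hf x y hx hy).dist_le ⟨hx, le_rfl, hxy⟩ ⟨hy, hxy, le_rfl⟩).trans (le_abs_self _)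

lemma Icc_zero_natCast_subset_biUnion_Icc {M : ℕ} (hM : 0 < M) :
    Icc (0 : ℝ) M ⊆ ⋃ k ∈ Finset.range M, Icc (k : ℝ) (k + 1) := by
  intro w ⟨hw0, hwM⟩
  simp only [mem_iUnion, Finset.mem_range, mem_Icc]
  rcases lt_or_ge ⌊w⌋₊ M with hlt | hge
  · exact ⟨⌊w⌋₊, hlt, Nat.floor_le hw0, (Nat.lt_floor_add_one w).le⟩
  · have : (M : ℝ) ≤ w := (Nat.cast_le.mpr hge).trans (Nat.floor_le hw0)
    refine ⟨M - 1, by omega, ?_, ?_⟩ <;> rw [Nat.cast_pred hM] <;> linarith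

theorem card_grid_squares_of_curve_general
    (L : ℝ) (hL : 0 < L) (N : ℕ) (hN : 0 < N)
    (γ : ℝ → EuclideanSpace ℝ (Fin 2))
    (hγvar : eVariationOn γ (Set.Icc 0 1) ≤ ENNReal.ofReal L) :
    {p : ℤ × ℤ | (γ '' Set.Icc 0 1 ∩ gridSquare N p).Nonempty}.encard
      ≤ ((4 * N * ⌈L⌉.toNat : ℕ) : ℕ∞) := by
  set v := variationOnFromTo γ (Icc 0 1) 0
  set M := N * ⌈L⌉₊
  have hbv : BoundedVariationOn γ (Icc 0 1) := ne_top_of_le_ne_top ENNReal.ofReal_ne_top hγvar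
  have hM : 0 < M := Nat.mul_pos hN (Nat.ceil_pos.mpr hL)
  have hv (t : ℝ) (ht : t ∈ Icc (0 : ℝ) 1) : N * v t ∈ Icc (0 : ℝ) M := by
    refine ⟨by positivity [variationOnFromTo.nonneg_of_le γ (Icc 0 1) ht.1], ?_⟩
    calc N * v t ≤ N * (eVariationOn γ (Icc 0 1)).toReal := by
          gcongr; exact (le_abs_self _).trans (variationOnFromTo.abs_le_eVariationOn hbv)
      _ ≤ N * ⌈L⌉₊ := by
          gcongr; exact (ENNReal.toReal_le_of_le_ofReal hL.le hγvar).trans (Nat.le_ceil L)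
      _ = M := by push_cast [M]; rfl
  let piece (k : ℕ) := {t ∈ Icc (0 : ℝ) 1 | N * v t ∈ Icc (k : ℝ) (k + 1)}
  rw [setOf_inter_gridSquare_nonempty hN, Int.ceil_toNat, mul_assoc, Nat.cast_mul,
    ← Finset.card_range (N * ⌈L⌉₊)]
  refine encard_image_gridIndex_le_of_subset_biUnion (B := fun k => γ '' piece k) ?_ ?_
  · rintro _ ⟨t, ht, rfl⟩
    obtain ⟨k, hk, hkt⟩ := mem_iUnion₂.mp (Icc_zero_natCast_subset_biUnion_Icc hM (hv t ht))
    exact mem_iUnion₂.mpr ⟨k, hk, t, ⟨ht, hkt⟩, rfl⟩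
  · rintro k - _ ⟨x, hx, rfl⟩ _ ⟨y, hy, rfl⟩
    calc N * dist (γ x) (γ y) ≤ N * |v y - v x| := by
          gcongr; exact dist_le_abs_variationOnFromTo_sub hbv.locallyBoundedVariationOn
            (left_mem_Icc.2 zero_le_one) hx.1 hy.1
      _ = dist (N * v y) (N * v x) := by rw [Real.dist_eq, ← mul_sub, abs_mul, Nat.abs_cast]
      _ ≤ 1 := (Real.dist_le_of_mem_Icc hy.2 hx.2).trans (add_sub_cancel_left _ _).le

/-- Bound `#(G_{∂S}) ≤ 4N⌈L⌉` from the proof of Lemma 4.4: the image of a continuous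
curve of total variation at most `L` meets at most `4·N·⌈L⌉` of the grid squares of
side `1/N`. -/
theorem card_grid_squares_of_curve
    (L : ℝ) (hL : 0 < L) (N : ℕ) (hN : 0 < N)
    (γ : ℝ → EuclideanSpace ℝ (Fin 2))
    (hγcont : ContinuousOn γ (Set.Icc 0 1))
    (hγvar : eVariationOn γ (Set.Icc 0 1) ≤ ENNReal.ofReal L) :
    {p : ℤ × ℤ | (γ '' Set.Icc 0 1 ∩ gridSquare N p).Nonempty}.encard
      ≤ ((4 * N * ⌈L⌉.toNat : ℕ) : ℕ∞) :=
  card_grid_squares_of_curve_general L hL N hN γ hγvar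
end
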